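/- Let x : V → U (V ⊆ ℝ^{n−1} open) be a smooth hypersurface parametrization with projection factors B^i_α = ∂x^i/∂u^α of rank n−1, with supporting element y^i = Σ_α B^i_α(u) v^α ≠ 0 at each (u,v). Assume g_{ij} is positive definite along the hypersurface, L* > 0, Σ_i b_i N^i = 0 along the hypersurface (N the unit normal of (U,L)), and that the Randers conformal change is projective: G*^i = G^i + P y^i for a smooth scalar P. Then the hypersurface is totally geodesic in (U, L) (i.e., its normal curvature H_α vanishes identically) if and only if it is totally geodesic in (U, L*) (i.e., the normal curvature H*_α computed from L* with unit normal N* = N/√τ vanishes identically). -/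

import Mathlib

open Real

/-- Partial derivative with respect to the `i`-th `y`-coordinate. -/
noncomputable def pdy {n : ℕ} (f : (Fin n → ℝ) → ℝ) (i : Fin n) (y : Fin n → ℝ) : ℝ :=
  fderiv ℝ f y (Pi.single i 1)

/-- Partial derivative of a function of the position variable in the `i`-th direction. -/
noncomputable def pdx {n : ℕ} (f : (Fin n → ℝ) → ℝ) (i : Fin n) (x : Fin n → ℝ) : ℝ :=
  fderiv ℝ f x (Pi.single i 1)

/-- Second partial derivative with respect to the `y`-coordinates:
`∂̇_i ∂̇_j f` evaluated at `y`. -/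
noncomputable def pdy2 {n : ℕ} (f : (Fin n → ℝ) → ℝ) (i j : Fin n) (y : Fin n → ℝ) : ℝ :=
  fderiv ℝ (fun z => fderiv ℝ f z (Pi.single j 1)) y (Pi.single i 1)

/-- The fundamental (metric) tensor `g_{ij} = ½ ∂̇_i∂̇_j (L²)` of a Finsler metric `L`. -/
noncomputable def gten {n : ℕ} (L : (Fin n → ℝ) → (Fin n → ℝ) → ℝ)
    (x : Fin n → ℝ) (i j : Fin n) (y : Fin n → ℝ) : ℝ :=
  (1 / 2) * pdy2 (fun z => (L x z) ^ 2) i j y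

/-- The fundamental tensor as a matrix. -/
noncomputable def gmat {n : ℕ} (L : (Fin n → ℝ) → (Fin n → ℝ) → ℝ)
    (x y : Fin n → ℝ) : Matrix (Fin n) (Fin n) ℝ :=
  Matrix.of fun i j => gten L x i j y

/-- The geodesic spray coefficients `G^i = ½ γ^i_{jk} y^j y^k`, where
`γ^i_{jk} = ½ g^{ir} (∂g_{jr}/∂x^k + ∂g_{kr}/∂x^j − ∂g_{jk}/∂x^r)`. -/
noncomputable def spray {n : ℕ} (L : (Fin n → ℝ) → (Fin n → ℝ) → ℝ)
    (x y : Fin n → ℝ) (i : Fin n) : ℝ :=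
  (1 / 2) * ∑ j, ∑ k,
    ((1 / 2) * ∑ r, (gmat L x y)⁻¹ i r *
        (pdx (fun z => gten L z j r y) k x + pdx (fun z => gten L z k r y) j x
          - pdx (fun z => gten L z j k y) r x))
      * y j * y k

/-- The projection factors `B^i_α = ∂x^i/∂u^α` of a hypersurface parametrization. -/
noncomputable def Bproj {n : ℕ} (xmap : (Fin (n - 1) → ℝ) → (Fin n → ℝ))
    (u : Fin (n - 1) → ℝ) (α : Fin (n - 1)) (i : Fin n) : ℝ :=
  fderiv ℝ xmap u (Pi.single α 1) i

/-- The second derivatives `B^i_{βα} = ∂²x^i/∂u^β∂u^α` of a hypersurface parametrization. -/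
noncomputable def B2 {n : ℕ} (xmap : (Fin (n - 1) → ℝ) → (Fin n → ℝ))
    (u : Fin (n - 1) → ℝ) (β α : Fin (n - 1)) (i : Fin n) : ℝ :=
  fderiv ℝ (fun w => fderiv ℝ xmap w (Pi.single α 1) i) u (Pi.single β 1)

/-- The supporting element `y^i = Σ_α v^α B^i_α` of the hypersurface. -/
noncomputable def yvec {n : ℕ} (xmap : (Fin (n - 1) → ℝ) → (Fin n → ℝ))
    (u : Fin (n - 1) → ℝ) (v : Fin (n - 1) → ℝ) : Fin n → ℝ :=
  fun i => ∑ α, v α * Bproj xmap u α i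

/-- The normal curvature vector `H_α = N_i (B^i_{0α} + N^i_j B^j_α)` of a hypersurface,
computed with respect to the metric `L` and a normal vector `N`, where
`N_i = Σ_j g_{ij} N^j`, `B^i_{0α} = Σ_β v^β B^i_{βα}`, and `N^i_j = ∂̇_j G^i`. -/
noncomputable def normalCurv {n : ℕ} (L : (Fin n → ℝ) → (Fin n → ℝ) → ℝ)
    (xmap : (Fin (n - 1) → ℝ) → (Fin n → ℝ))
    (u : Fin (n - 1) → ℝ) (v : Fin (n - 1) → ℝ)
    (N : Fin n → ℝ) (α : Fin (n - 1)) : ℝ :=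
  ∑ i, (∑ j, gten L (xmap u) i j (yvec xmap u v) * N j) *
    ((∑ β, v β * B2 xmap u β α i)
      + ∑ j, pdy (fun z => spray L (xmap u) z i) j (yvec xmap u v) * Bproj xmap u α j)

/-- The Randers conformal change `L*(x,y) = e^{σ(x)} L(x,y) + β(x,y)`. -/
noncomputable def RandersChange {n : ℕ} (L : (Fin n → ℝ) → (Fin n → ℝ) → ℝ)
    (σ : (Fin n → ℝ) → ℝ) (b : (Fin n → ℝ) → (Fin n → ℝ))
    (x y : Fin n → ℝ) : ℝ :=
  Real.exp (σ x) * L x y + ∑ j, b x j * y j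

/-- The factor `τ = e^{σ} L*/L` of the Randers conformal change. -/
noncomputable def tauRC {n : ℕ} (L : (Fin n → ℝ) → (Fin n → ℝ) → ℝ)
    (σ : (Fin n → ℝ) → ℝ) (b : (Fin n → ℝ) → (Fin n → ℝ))
    (x y : Fin n → ℝ) : ℝ :=
  Real.exp (σ x) * RandersChange L σ b x y / L x y


/-!
Pointwise `H*_α = √τ H_α`. Write `ν_i = g_{ij} N^j` and `l = ∂̇L`. Since `g_{ij} = l_i l_j +
L ∂̇_i l_j`, the Euler identities `y^i l_i = L`, `y^i ∂̇_i l_j = 0` give `y^i g_{ij} = L l_j`; as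
`ν` annihilates every `B_α`, hence `y`, this forces `l_j N^j = 0`. The Randers metric is
`g*_{ij} = τ (g_{ij} - l_i l_j) + m_i m_j` with `m = e^σ l + b`, and `b_j N^j = 0`, so
`g*_{ij} N^j = τ ν_i` and `g*_{ij} N*^j = √τ ν_i`. Projectivity adds `(∂̇_j P) y^i + P δ^i_j`
to `N^i_j`, and both terms are killed by `ν`. Since `τ > 0`, `H` and `H*` vanish together.
-/

open Finset Filter Topology

section Homogeneous

variable {E : Type*} [NormedAddCommGroup E] [NormedSpace ℝ E] {f : E → ℝ}

lemma fderiv_apply_self_of_homogeneous {y : E} (hf : DifferentiableAt ℝ f y) (k : ℕ)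
    (hhom : ∀ c : ℝ, 0 < c → f (c • y) = c ^ k * f y) :
    fderiv ℝ f y y = k * f y := by
  have hray : HasDerivAt (fun c : ℝ => f (c • y)) (fderiv ℝ f y y) 1 := by
    have hline : HasDerivAt (fun c : ℝ => c • y) y 1 := by
      simpa using (hasDerivAt_id (1 : ℝ)).smul_const y
    have hf1 : HasFDerivAt f (fderiv ℝ f y) ((1 : ℝ) • y) := by
      rw [one_smul]
      exact hf.hasFDerivAt
    exact hf1.comp_hasDerivAt 1 hline
  have hpow : HasDerivAt (fun c : ℝ => c ^ k * f y) (k * f y) 1 := by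
    simpa using (hasDerivAt_pow k (1 : ℝ)).mul_const (f y)
  have hev : (fun c : ℝ => f (c • y)) =ᶠ[𝓝 1] fun c => c ^ k * f y := by
    filter_upwards [eventually_gt_nhds one_pos] with c hc using hhom c hc
  exact (hray.congr_of_eventuallyEq hev.symm).unique hpow

lemma fderiv_smul_of_homogeneous (hf : ∀ z ≠ 0, DifferentiableAt ℝ f z)
    (hhom : ∀ z ≠ 0, ∀ c : ℝ, 0 < c → f (c • z) = c * f z)
    {z : E} (hz : z ≠ 0) {c : ℝ} (hc : 0 < c) :
    fderiv ℝ f (c • z) = fderiv ℝ f z := by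
  have hcomp : HasFDerivAt (fun w => f (c • w)) ((fderiv ℝ f (c • z)).comp (c • .id ℝ E)) z :=
    (hf _ (smul_ne_zero hc.ne' hz)).hasFDerivAt.comp z ((hasFDerivAt_id z).const_smul c)
  have hev : (fun w => f (c • w)) =ᶠ[𝓝 z] fun w => c * f w := by
    filter_upwards [isOpen_ne.mem_nhds hz] with w hw using hhom w hw c hc
  have heq := (hcomp.congr_of_eventuallyEq hev.symm).unique ((hf z hz).hasFDerivAt.const_mul c)
  ext w
  simpa [hc.ne'] using DFunLike.congr_fun heq w

lemma ContDiffAt.differentiableAt_fderiv_apply {E : Type*} [NormedAddCommGroup E]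
    [NormedSpace ℝ E] {q : E → ℝ} {y : E} (hq : ContDiffAt ℝ 2 q y) (v : E) :
    DifferentiableAt ℝ (fun z => fderiv ℝ q z v) y :=
  ((hq.fderiv_right (m := 1) (by norm_num)).clm_apply contDiffAt_const).differentiableAt
    one_ne_zero

end Homogeneous

section Euler

variable {n : ℕ}

lemma ContinuousLinearMap.apply_eq_sum_mul_single (T : (Fin n → ℝ) →L[ℝ] ℝ) (y : Fin n → ℝ) :
    T y = ∑ i, y i * T (Pi.single i 1) := by
  have hbasis (i : Fin n) : (fun j => if i = j then (1 : ℝ) else 0) = Pi.single i 1 := by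
    ext j
    simp [Pi.single_apply, eq_comm]
  simpa [hbasis] using T.toLinearMap.pi_apply_eq_sum_univ y

variable {F : (Fin n → ℝ) → ℝ} {y : Fin n → ℝ}

lemma sum_mul_pdy_of_homogeneous (hF : ∀ z ≠ 0, DifferentiableAt ℝ F z)
    (hhom : ∀ z ≠ 0, ∀ c : ℝ, 0 < c → F (c • z) = c * F z) (hy : y ≠ 0) :
    ∑ i, y i * pdy F i y = F y := by
  have h := fderiv_apply_self_of_homogeneous (hF y hy) 1 fun c hc => by
    rw [pow_one, hhom y hy c hc]
  rw [(fderiv ℝ F y).apply_eq_sum_mul_single, Nat.cast_one, one_mul] at h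
  exact h

lemma sum_mul_pdy2_of_homogeneous (hF : ContDiffOn ℝ 2 F {z | z ≠ 0})
    (hhom : ∀ z ≠ 0, ∀ c : ℝ, 0 < c → F (c • z) = c * F z) (hy : y ≠ 0) (j : Fin n) :
    ∑ i, y i * pdy2 F i j y = 0 := by
  have hdiff : ∀ z ≠ 0, DifferentiableAt ℝ F z := fun z hz =>
    (hF.contDiffAt (isOpen_ne.mem_nhds hz)).differentiableAt (by norm_num)
  have hpartial := (hF.contDiffAt (isOpen_ne.mem_nhds hy)).differentiableAt_fderiv_apply
    (Pi.single j 1)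
  have h := fderiv_apply_self_of_homogeneous hpartial 0 fun c hc => by
    rw [pow_zero, one_mul, fderiv_smul_of_homogeneous hdiff hhom hy hc]
  rw [ContinuousLinearMap.apply_eq_sum_mul_single, Nat.cast_zero, zero_mul] at h
  exact h

end Euler

section SecondDerivative

variable {n : ℕ} {q : (Fin n → ℝ) → ℝ} {y : Fin n → ℝ}

lemma pdy2_sq (hq : ContDiffAt ℝ 2 q y) (i j : Fin n) :
    pdy2 (fun z => q z ^ 2) i j y = 2 * (pdy q i y * pdy q j y + q y * pdy2 q i j y) := by
  have hpartial := hq.differentiableAt_fderiv_apply (Pi.single j 1)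
  have hfirst : (fun z => fderiv ℝ (fun w => q w ^ 2) z (Pi.single j 1))
      =ᶠ[𝓝 y] fun z => 2 * q z * fderiv ℝ q z (Pi.single j 1) := by
    filter_upwards [hq.eventually (by simp)] with z hz
    rw [fderiv_fun_pow 2 (hz.differentiableAt (by norm_num))]
    simp
  have hprod := ((hq.differentiableAt (by norm_num)).hasFDerivAt.const_mul 2).fun_mul
    hpartial.hasFDerivAt
  unfold pdy2
  rw [hfirst.fderiv_eq, hprod.fderiv]
  simp only [add_apply, smul_apply, smul_eq_mul, pdy]
  ring

end SecondDerivative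

section RandersMetric

variable {n : ℕ} {L : (Fin n → ℝ) → (Fin n → ℝ) → ℝ} {σ : (Fin n → ℝ) → ℝ}
  {b : (Fin n → ℝ) → (Fin n → ℝ)} {x y : Fin n → ℝ}

lemma gten_eq_pdy_mul_pdy_add (hL : ContDiffAt ℝ 2 (L x) y) (i j : Fin n) :
    gten L x i j y = pdy (L x) i y * pdy (L x) j y + L x y * pdy2 (L x) i j y := by
  rw [gten, pdy2_sq hL]
  ring

lemma pdy_randersChange {z : Fin n → ℝ} (hL : DifferentiableAt ℝ (L x) z) (i : Fin n) :
    pdy (RandersChange L σ b x) i z = exp (σ x) * pdy (L x) i z + b x i := by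
  have hlin : HasFDerivAt (fun w : Fin n → ℝ => ∑ k, b x k * w k)
      (∑ k, b x k • ContinuousLinearMap.proj k) z :=
    HasFDerivAt.fun_sum fun k _ => (hasFDerivAt_apply (𝕜 := ℝ) k z).const_mul (b x k)
  have hderiv : HasFDerivAt (RandersChange L σ b x)
      (exp (σ x) • fderiv ℝ (L x) z + ∑ k, b x k • ContinuousLinearMap.proj k) z :=
    (hL.hasFDerivAt.const_mul (exp (σ x))).fun_add hlin
  rw [pdy, hderiv.fderiv]
  simp [pdy, Pi.single_apply]

lemma pdy2_randersChange (hL : ContDiffAt ℝ 2 (L x) y) (i j : Fin n) :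
    pdy2 (RandersChange L σ b x) i j y = exp (σ x) * pdy2 (L x) i j y := by
  have hpartial := hL.differentiableAt_fderiv_apply (Pi.single j 1)
  have hfirst : (fun z => fderiv ℝ (RandersChange L σ b x) z (Pi.single j 1))
      =ᶠ[𝓝 y] fun z => exp (σ x) * fderiv ℝ (L x) z (Pi.single j 1) + b x j := by
    filter_upwards [hL.eventually (by simp)] with z hz
    exact pdy_randersChange (hz.differentiableAt (by norm_num)) j
  rw [pdy2, hfirst.fderiv_eq, ((hpartial.hasFDerivAt.const_mul _).add_const _).fderiv]
  simp [pdy2]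

lemma gten_randersChange (hL : ContDiffAt ℝ 2 (L x) y) (i j : Fin n) :
    gten (RandersChange L σ b) x i j y
      = (exp (σ x) * pdy (L x) i y + b x i) * (exp (σ x) * pdy (L x) j y + b x j)
        + exp (σ x) * RandersChange L σ b x y * pdy2 (L x) i j y := by
  have hlin : ContDiff ℝ 2 (fun z : Fin n → ℝ => ∑ k, b x k * z k) :=
    ContDiff.sum fun k _ => contDiff_const.mul (contDiff_apply ℝ ℝ k)
  have hq : ContDiffAt ℝ 2 (RandersChange L σ b x) y :=
    (contDiffAt_const.mul hL).add hlin.contDiffAt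
  rw [gten, pdy2_sq hq, pdy_randersChange (hL.differentiableAt (by norm_num)),
    pdy_randersChange (hL.differentiableAt (by norm_num)), pdy2_randersChange hL]
  ring

end RandersMetric

section Contraction

variable {n : ℕ} {L : (Fin n → ℝ) → (Fin n → ℝ) → ℝ} {σ : (Fin n → ℝ) → ℝ}
  {b : (Fin n → ℝ) → (Fin n → ℝ)} {x y : Fin n → ℝ}

lemma sum_mul_gten_of_homogeneous (hL : ContDiffOn ℝ 2 (L x) {z | z ≠ 0})
    (hhom : ∀ z ≠ 0, ∀ c : ℝ, 0 < c → L x (c • z) = c * L x z) (hy : y ≠ 0) (j : Fin n) :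
    ∑ i, y i * gten L x i j y = L x y * pdy (L x) j y := by
  have hLy : ContDiffAt ℝ 2 (L x) y := hL.contDiffAt (isOpen_ne.mem_nhds hy)
  have hdiff : ∀ z ≠ 0, DifferentiableAt ℝ (L x) z := fun z hz =>
    (hL.contDiffAt (isOpen_ne.mem_nhds hz)).differentiableAt (by norm_num)
  simp only [gten_eq_pdy_mul_pdy_add hLy, mul_add, sum_add_distrib, ← mul_assoc, ← sum_mul]
  rw [sum_mul_pdy_of_homogeneous hdiff hhom hy]
  simp only [mul_comm _ (L x y), mul_assoc, ← mul_sum, sum_mul_pdy2_of_homogeneous hL hhom hy]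
  ring

lemma sum_gten_randersChange_mul (hL : ContDiffOn ℝ 2 (L x) {z | z ≠ 0})
    (hhom : ∀ z ≠ 0, ∀ c : ℝ, 0 < c → L x (c • z) = c * L x z) (hy : y ≠ 0)
    (hpos : 0 < L x y) {N : Fin n → ℝ} (hyN : ∑ i, (∑ j, gten L x i j y * N j) * y i = 0)
    (hbN : ∑ j, b x j * N j = 0) (i : Fin n) :
    ∑ j, gten (RandersChange L σ b) x i j y * N j
      = tauRC L σ b x y * ∑ j, gten L x i j y * N j := by
  have hLy : ContDiffAt ℝ 2 (L x) y := hL.contDiffAt (isOpen_ne.mem_nhds hy)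
  have hlN : ∑ j, pdy (L x) j y * N j = 0 := by
    have h : ∑ i, (∑ j, gten L x i j y * N j) * y i = L x y * ∑ j, pdy (L x) j y * N j :=
      calc ∑ i, (∑ j, gten L x i j y * N j) * y i
          = ∑ j, (∑ i, y i * gten L x i j y) * N j := by
            simp only [sum_mul]
            rw [sum_comm]
            exact sum_congr rfl fun j _ => sum_congr rfl fun i _ => by ring
        _ = L x y * ∑ j, pdy (L x) j y * N j := by
            simp only [sum_mul_gten_of_homogeneous hL hhom hy, mul_sum, mul_assoc]
    rw [h] at hyN
    exact (mul_eq_zero.1 hyN).resolve_left hpos.ne'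
  simp only [gten_randersChange hLy, gten_eq_pdy_mul_pdy_add hLy, add_mul, sum_add_distrib,
    mul_assoc, ← mul_sum, hlN, hbN, tauRC]
  field_simp
  ring

end Contraction

section Smoothness

variable {E E' G : Type*} [NormedAddCommGroup E] [NormedSpace ℝ E] [NormedAddCommGroup E']
  [NormedSpace ℝ E'] [NormedAddCommGroup G] [NormedSpace ℝ G] {f : E × E' → G} {W : Set (E × E')}

lemma ContDiffOn.fderiv_snd_apply (hf : ContDiffOn ℝ (⊤ : ℕ∞) f W) (hW : IsOpen W) (v : E') :
    ContDiffOn ℝ (⊤ : ℕ∞) (fun p => fderiv ℝ (fun z => f (p.1, z)) p.2 v) W := by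
  intro p hp
  have hf' : ContDiffAt ℝ (⊤ : ℕ∞) (f ∘ fun q : (E × E') × E' => (q.1.1, q.2)) (p, p.2) :=
    (hf.contDiffAt (hW.mem_nhds hp)).comp _ (by fun_prop)
  exact ((hf'.fderiv (f := fun (q : E × E') z => f (q.1, z)) contDiffAt_snd le_rfl).clm_apply
    contDiffAt_const).contDiffWithinAt

lemma ContDiffOn.fderiv_fst_apply (hf : ContDiffOn ℝ (⊤ : ℕ∞) f W) (hW : IsOpen W) (v : E) :
    ContDiffOn ℝ (⊤ : ℕ∞) (fun p => fderiv ℝ (fun w => f (w, p.2)) p.1 v) W := by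
  intro p hp
  have hf' : ContDiffAt ℝ (⊤ : ℕ∞) (f ∘ fun q : (E × E') × E => (q.2, q.1.2)) (p, p.1) :=
    (hf.contDiffAt (hW.mem_nhds hp)).comp _ (by fun_prop)
  exact ((hf'.fderiv (f := fun (q : E × E') w => f (w, q.2)) contDiffAt_fst le_rfl).clm_apply
    contDiffAt_const).contDiffWithinAt

lemma ContDiffOn.differentiableAt_slice (hf : ContDiffOn ℝ (⊤ : ℕ∞) f W) (hW : IsOpen W)
    {x : E} {y : E'} (hxy : (x, y) ∈ W) : DifferentiableAt ℝ (fun z => f (x, z)) y :=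
  ((hf.differentiableOn (by simp)).differentiableAt (hW.mem_nhds hxy)).comp y (by fun_prop)

end Smoothness

section MatrixInverse

variable {m : Type*} [Fintype m] [DecidableEq m]

lemma contDiff_det_of : ContDiff ℝ (⊤ : ℕ∞) fun M : m → m → ℝ => (Matrix.of M).det := by
  simp only [Matrix.det_apply, Matrix.of_apply]
  fun_prop

lemma contDiffAt_inv_of_apply {M : m → m → ℝ} (hM : (Matrix.of M).det ≠ 0) (i r : m) :
    ContDiffAt ℝ (⊤ : ℕ∞) (fun M' : m → m → ℝ => (Matrix.of M')⁻¹ i r) M := by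
  have hcramer : (fun M' : m → m → ℝ => (Matrix.of M')⁻¹ i r)
      = fun M' =>
        ((Matrix.of M').det)⁻¹ * (Matrix.of (Function.update M' r (Pi.single i 1))).det := by
    ext M'
    rw [Matrix.inv_def, Ring.inverse_eq_inv, Matrix.smul_apply, Matrix.adjugate_apply, smul_eq_mul]
    rfl
  have hupdate :
      ContDiff ℝ (⊤ : ℕ∞) fun M' : m → m → ℝ => Function.update M' r (Pi.single i 1) := by
    refine contDiff_pi.2 fun a => ?_
    by_cases ha : a = r
    · subst ha
      simpa using contDiff_const
    · simpa [Function.update_of_ne ha] using contDiff_apply ℝ (m → ℝ) a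
  rw [hcramer]
  exact (contDiff_det_of.contDiffAt.inv hM).mul (contDiff_det_of.comp hupdate).contDiffAt

lemma Matrix.det_ne_zero_of_forall_sum_mul_pos {A : Matrix m m ℝ}
    (hA : ∀ w : m → ℝ, w ≠ 0 → 0 < ∑ i, ∑ j, A i j * w i * w j) :
    A.det ≠ 0 := by
  intro hdet
  obtain ⟨w, hw, hAw⟩ := Matrix.exists_mulVec_eq_zero_iff.2 hdet
  have hquad : ∑ i, ∑ j, A i j * w i * w j = ∑ i, w i * A.mulVec w i := by
    simp only [Matrix.mulVec, dotProduct, mul_sum]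
    exact sum_congr rfl fun i _ => sum_congr rfl fun j _ => by ring
  simpa [hquad, hAw] using hA w hw

end MatrixInverse

section Spray

variable {n : ℕ} {U : Set (Fin n → ℝ)} {L : (Fin n → ℝ) → (Fin n → ℝ) → ℝ} {x y : Fin n → ℝ}

lemma contDiffOn_gten (hU : IsOpen U)
    (hL : ContDiffOn ℝ (⊤ : ℕ∞) (fun p : (Fin n → ℝ) × (Fin n → ℝ) => L p.1 p.2)
      (U ×ˢ {y | y ≠ 0})) (i j : Fin n) :
    ContDiffOn ℝ (⊤ : ℕ∞) (fun p : (Fin n → ℝ) × (Fin n → ℝ) => gten L p.1 i j p.2)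
      (U ×ˢ {y | y ≠ 0}) := by
  have hW := hU.prod (isOpen_ne (x := (0 : Fin n → ℝ)))
  exact (((hL.pow 2).fderiv_snd_apply hW (Pi.single j 1)).fderiv_snd_apply hW
    (Pi.single i 1)).const_smul (1 / 2 : ℝ)

lemma differentiableAt_spray (hU : IsOpen U)
    (hL : ContDiffOn ℝ (⊤ : ℕ∞) (fun p : (Fin n → ℝ) × (Fin n → ℝ) => L p.1 p.2)
      (U ×ˢ {y | y ≠ 0})) (hx : x ∈ U) (hy : y ≠ 0) (hdet : (gmat L x y).det ≠ 0) (i : Fin n) :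
    DifferentiableAt ℝ (fun z => spray L x z i) y := by
  have hW := hU.prod (isOpen_ne (x := (0 : Fin n → ℝ)))
  have hxy : (x, y) ∈ U ×ˢ {y | y ≠ 0} := ⟨hx, hy⟩
  have hentry (a c : Fin n) : DifferentiableAt ℝ (fun z => gten L x a c z) y :=
    (contDiffOn_gten hU hL a c).differentiableAt_slice hW hxy
  have hinv (r : Fin n) : DifferentiableAt ℝ (fun z => (gmat L x z)⁻¹ i r) y :=
    DifferentiableAt.comp (g := fun M : Fin n → Fin n → ℝ => (Matrix.of M)⁻¹ i r) y
      ((contDiffAt_inv_of_apply hdet i r).differentiableAt (by simp))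
      (differentiableAt_pi.2 fun a => differentiableAt_pi.2 fun c => hentry a c)
  have hpdx (a c k : Fin n) : DifferentiableAt ℝ (fun z => pdx (fun w => gten L w a c z) k x) y :=
    ((contDiffOn_gten hU hL a c).fderiv_fst_apply hW (Pi.single k 1)).differentiableAt_slice hW hxy
  unfold spray
  refine .const_mul (.fun_sum fun j _ => .fun_sum fun k _ => ?_) _
  refine ((DifferentiableAt.const_mul ?_ _).mul (by fun_prop)).mul (by fun_prop)
  refine .fun_sum fun r _ => (hinv r).mul ?_
  exact ((hpdx j r k).add (hpdx k r j)).sub (hpdx j k r)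

end Spray

section Hypersurface

variable {n : ℕ} {xmap : (Fin (n - 1) → ℝ) → (Fin n → ℝ)} {u v : Fin (n - 1) → ℝ}

lemma sum_mul_yvec_eq_zero {ν : Fin n → ℝ} (hν : ∀ β, ∑ i, ν i * Bproj xmap u β i = 0) :
    ∑ i, ν i * yvec xmap u v i = 0 := by
  simp only [yvec, mul_sum]
  rw [sum_comm]
  simp only [mul_left_comm (ν _), ← mul_sum, hν, mul_zero, sum_const_zero]

lemma pdy_add_mul_apply {y : Fin n → ℝ} {g P : (Fin n → ℝ) → ℝ} (hg : DifferentiableAt ℝ g y)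
    (hP : DifferentiableAt ℝ P y) (i j : Fin n) :
    pdy (fun z => g z + P z * z i) j y
      = pdy g j y + pdy P j y * y i + P y * (Pi.single j 1 : Fin n → ℝ) i := by
  have hcoord : HasFDerivAt (fun z : Fin n → ℝ => z i) (ContinuousLinearMap.proj i) y :=
    hasFDerivAt_apply (𝕜 := ℝ) i y
  rw [pdy, (hg.hasFDerivAt.fun_add (hP.hasFDerivAt.fun_mul hcoord)).fderiv]
  simp only [pdy, add_apply, smul_apply, ContinuousLinearMap.proj_apply, smul_eq_mul]
  ring

lemma normalCurv_eq_mul_of_projective {L L' : (Fin n → ℝ) → (Fin n → ℝ) → ℝ}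
    {P : (Fin n → ℝ) → ℝ} {N N' : Fin n → ℝ} {c : ℝ}
    (hcov : ∀ i, ∑ j, gten L' (xmap u) i j (yvec xmap u v) * N' j
      = c * ∑ j, gten L (xmap u) i j (yvec xmap u v) * N j)
    (hNB : ∀ β, ∑ i, (∑ j, gten L (xmap u) i j (yvec xmap u v) * N j) * Bproj xmap u β i = 0)
    (hspray : ∀ᶠ z in 𝓝 (yvec xmap u v), ∀ i,
      spray L' (xmap u) z i = spray L (xmap u) z i + P z * z i)
    (hG : ∀ i, DifferentiableAt ℝ (fun z => spray L (xmap u) z i) (yvec xmap u v))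
    (hP : DifferentiableAt ℝ P (yvec xmap u v)) (α : Fin (n - 1)) :
    normalCurv L' xmap u v N' α = c * normalCurv L xmap u v N α := by
  unfold normalCurv
  set y := yvec xmap u v
  set ν : Fin n → ℝ := fun i => ∑ j, gten L (xmap u) i j y * N j
  have hνy : ∑ i, ν i * y i = 0 := sum_mul_yvec_eq_zero hNB
  have hpdy (i j : Fin n) : pdy (fun z => spray L' (xmap u) z i) j y
      = pdy (fun z => spray L (xmap u) z i) j y + pdy P j y * y i
        + P y * (Pi.single j 1 : Fin n → ℝ) i := by
    have hev : (fun z => spray L' (xmap u) z i) =ᶠ[𝓝 y]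
        fun z => spray L (xmap u) z i + P z * z i := hspray.mono fun z hz => hz i
    rw [pdy, hev.fderiv_eq]
    exact pdy_add_mul_apply (hG i) hP i j
  have hrow (i : Fin n) : ∑ j, pdy (fun z => spray L' (xmap u) z i) j y * Bproj xmap u α j
      = ∑ j, pdy (fun z => spray L (xmap u) z i) j y * Bproj xmap u α j
        + (∑ j, pdy P j y * Bproj xmap u α j) * y i + P y * Bproj xmap u α i := by
    simp only [hpdy, add_mul, sum_add_distrib, sum_mul, mul_assoc, ← mul_sum]
    simp [Pi.single_apply, mul_comm, mul_left_comm]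
  simp only [hcov, hrow]
  set dP := ∑ j, pdy P j y * Bproj xmap u α j
  calc ∑ i, c * ν i * ((∑ β, v β * B2 xmap u β α i)
          + (∑ j, pdy (fun z => spray L (xmap u) z i) j y * Bproj xmap u α j
            + dP * y i + P y * Bproj xmap u α i))
      = c * ∑ i, ν i * ((∑ β, v β * B2 xmap u β α i)
          + ∑ j, pdy (fun z => spray L (xmap u) z i) j y * Bproj xmap u α j)
        + c * dP * ∑ i, ν i * y i
        + c * P y * ∑ i, ν i * Bproj xmap u α i := by
        simp only [mul_sum, ← sum_add_distrib]
        exact sum_congr rfl fun i _ => by ring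
    _ = _ := by rw [hνy, hNB α]; ring

end Hypersurface

section RandersChange

variable {n : ℕ} {U : Set (Fin n → ℝ)} {L : (Fin n → ℝ) → (Fin n → ℝ) → ℝ}
  {σ : (Fin n → ℝ) → ℝ} {b : (Fin n → ℝ) → (Fin n → ℝ)}

lemma tauRC_pos {x y : Fin n → ℝ} (hL : 0 < L x y) (hLstar : 0 < RandersChange L σ b x y) :
    0 < tauRC L σ b x y :=
  div_pos (mul_pos (exp_pos _) hLstar) hL

lemma normalCurv_randersChange {xmap : (Fin (n - 1) → ℝ) → (Fin n → ℝ)}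
    {u v : Fin (n - 1) → ℝ} {N : Fin n → ℝ} {P : (Fin n → ℝ) → (Fin n → ℝ) → ℝ}
    (hU : IsOpen U)
    (hL : ContDiffOn ℝ (⊤ : ℕ∞) (fun p : (Fin n → ℝ) × (Fin n → ℝ) => L p.1 p.2)
      (U ×ˢ {y | y ≠ 0}))
    (hx : xmap u ∈ U) (hy : yvec xmap u v ≠ 0) (hpos : 0 < L (xmap u) (yvec xmap u v))
    (hhom : ∀ z ≠ 0, ∀ c : ℝ, 0 < c → L (xmap u) (c • z) = c * L (xmap u) z)
    (hdet : (gmat L (xmap u) (yvec xmap u v)).det ≠ 0)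
    (hLstar : 0 < RandersChange L σ b (xmap u) (yvec xmap u v))
    (hNB : ∀ β, ∑ i, ∑ j,
      gten L (xmap u) i j (yvec xmap u v) * Bproj xmap u β i * N j = 0)
    (hbN : ∑ i, b (xmap u) i * N i = 0)
    (hP : DifferentiableAt ℝ (P (xmap u)) (yvec xmap u v))
    (hproj : ∀ z ≠ 0, ∀ i, spray (RandersChange L σ b) (xmap u) z i
      = spray L (xmap u) z i + P (xmap u) z * z i) (α : Fin (n - 1)) :
    normalCurv (RandersChange L σ b) xmap u v
        (fun i => N i / √(tauRC L σ b (xmap u) (yvec xmap u v))) α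
      = √(tauRC L σ b (xmap u) (yvec xmap u v)) * normalCurv L xmap u v N α := by
  set x := xmap u
  set y := yvec xmap u v
  set τ := tauRC L σ b x y
  have hτ : 0 < τ := tauRC_pos hpos hLstar
  have hslice : ContDiffOn ℝ 2 (L x) {z | z ≠ 0} :=
    (hL.comp (contDiffOn_const.prodMk contDiffOn_id) fun z hz => ⟨hx, hz⟩).of_le (by norm_cast)
  have hNB' (β : Fin (n - 1)) : ∑ i, (∑ j, gten L x i j y * N j) * Bproj xmap u β i = 0 := by
    rw [← hNB β]
    exact sum_congr rfl fun i _ => by rw [sum_mul]; exact sum_congr rfl fun j _ => by ring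
  refine normalCurv_eq_mul_of_projective (fun i => ?_) hNB' ?_
    (differentiableAt_spray hU hL hx hy hdet) hP α
  · have hcontract : ∑ j, gten (RandersChange L σ b) x i j y * N j
        = τ * ∑ j, gten L x i j y * N j :=
      sum_gten_randersChange_mul hslice hhom hy hpos (sum_mul_yvec_eq_zero hNB') hbN i
    calc ∑ j, gten (RandersChange L σ b) x i j y * (N j / √τ)
        = (∑ j, gten (RandersChange L σ b) x i j y * N j) / √τ := by
          rw [sum_div]
          exact sum_congr rfl fun j _ => (mul_div_assoc _ _ _).symm
      _ = √τ * ∑ j, gten L x i j y * N j := by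
          rw [hcontract, div_eq_iff (Real.sqrt_pos.2 hτ).ne', mul_right_comm,
            Real.mul_self_sqrt hτ.le, mul_comm]
  · filter_upwards [isOpen_ne.mem_nhds hy] with z hz using hproj z hz

end RandersChange

theorem randers_conformal_totally_geodesic_general
    {n : ℕ} (U : Set (Fin n → ℝ)) (hU : IsOpen U)
    (L : (Fin n → ℝ) → (Fin n → ℝ) → ℝ)
    (hL : ContDiffOn ℝ (⊤ : ℕ∞)
      (fun p : (Fin n → ℝ) × (Fin n → ℝ) => L p.1 p.2)
      (U ×ˢ {y : Fin n → ℝ | y ≠ 0}))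
    (hLpos : ∀ x ∈ U, ∀ y : Fin n → ℝ, y ≠ 0 → 0 < L x y)
    (hLhom : ∀ x ∈ U, ∀ y : Fin n → ℝ, y ≠ 0 → ∀ c : ℝ, 0 < c →
      L x (c • y) = c * L x y)
    (σ : (Fin n → ℝ) → ℝ)
    (b : (Fin n → ℝ) → (Fin n → ℝ))
    (V : Set (Fin (n - 1) → ℝ))
    (xmap : (Fin (n - 1) → ℝ) → (Fin n → ℝ))
    (hxU : ∀ u ∈ V, xmap u ∈ U)
    (N : (Fin (n - 1) → ℝ) → (Fin (n - 1) → ℝ) → (Fin n → ℝ))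
    (hposdef : ∀ u ∈ V, ∀ v : Fin (n - 1) → ℝ, yvec xmap u v ≠ 0 →
      ∀ w : Fin n → ℝ, w ≠ 0 →
        0 < ∑ i, ∑ j, gten L (xmap u) i j (yvec xmap u v) * w i * w j)
    (hLstar : ∀ u ∈ V, ∀ v : Fin (n - 1) → ℝ, yvec xmap u v ≠ 0 →
      0 < RandersChange L σ b (xmap u) (yvec xmap u v))
    (hN1 : ∀ u ∈ V, ∀ v : Fin (n - 1) → ℝ, yvec xmap u v ≠ 0 →
      ∀ α, ∑ i, ∑ j,
        gten L (xmap u) i j (yvec xmap u v) * Bproj xmap u α i * N u v j = 0)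
    (hbN : ∀ u ∈ V, ∀ v : Fin (n - 1) → ℝ, yvec xmap u v ≠ 0 →
      ∑ i, b (xmap u) i * N u v i = 0)
    (P : (Fin n → ℝ) → (Fin n → ℝ) → ℝ)
    (hP : ContDiffOn ℝ (⊤ : ℕ∞)
      (fun p : (Fin n → ℝ) × (Fin n → ℝ) => P p.1 p.2)
      (U ×ˢ {y : Fin n → ℝ | y ≠ 0}))
    (hproj : ∀ x ∈ U, ∀ y : Fin n → ℝ, y ≠ 0 → ∀ i : Fin n,
      spray (RandersChange L σ b) x y i = spray L x y i + P x y * y i) :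
    (∀ u ∈ V, ∀ v : Fin (n - 1) → ℝ, yvec xmap u v ≠ 0 →
      ∀ α : Fin (n - 1), normalCurv L xmap u v (N u v) α = 0) ↔
    (∀ u ∈ V, ∀ v : Fin (n - 1) → ℝ, yvec xmap u v ≠ 0 →
      ∀ α : Fin (n - 1),
        normalCurv (RandersChange L σ b) xmap u v
          (fun i => N u v i /
            Real.sqrt (tauRC L σ b (xmap u) (yvec xmap u v))) α = 0) := by
  refine forall₂_congr fun u hu => forall₂_congr fun v hv => forall_congr' fun α => ?_
  have hx := hxU u hu
  have hpos := hLpos _ hx _ hv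
  have hscale := normalCurv_randersChange hU hL hx hv hpos (hLhom _ hx)
    (Matrix.det_ne_zero_of_forall_sum_mul_pos (hposdef u hu v hv)) (hLstar u hu v hv)
    (hN1 u hu v hv) (hbN u hu v hv)
    (hP.differentiableAt_slice (hU.prod isOpen_ne) ⟨hx, hv⟩) (hproj _ hx) α
  rw [hscale, mul_eq_zero,
    or_iff_right (Real.sqrt_pos.2 (tauRC_pos hpos (hLstar u hu v hv))).ne']

/-- Under a projective Randers conformal change, with `b` tangential along the hypersurface,
the hypersurface is totally geodesic in `(U, L)` (its normal curvature `H_α` vanishes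
identically) if and only if it is totally geodesic in `(U, L*)` (the normal curvature
`H*_α` computed from `L*` with the unit normal `N* = N/√τ` vanishes identically). -/
theorem randers_conformal_totally_geodesic
    {n : ℕ} (U : Set (Fin n → ℝ)) (hU : IsOpen U)
    (L : (Fin n → ℝ) → (Fin n → ℝ) → ℝ)
    (hL : ContDiffOn ℝ (⊤ : ℕ∞)
      (fun p : (Fin n → ℝ) × (Fin n → ℝ) => L p.1 p.2)
      (U ×ˢ {y : Fin n → ℝ | y ≠ 0}))
    (hLpos : ∀ x ∈ U, ∀ y : Fin n → ℝ, y ≠ 0 → 0 < L x y)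
    (hLhom : ∀ x ∈ U, ∀ y : Fin n → ℝ, y ≠ 0 → ∀ c : ℝ, 0 < c →
      L x (c • y) = c * L x y)
    (σ : (Fin n → ℝ) → ℝ) (hσ : ContDiffOn ℝ (⊤ : ℕ∞) σ U)
    (b : (Fin n → ℝ) → (Fin n → ℝ)) (hb : ContDiffOn ℝ (⊤ : ℕ∞) b U)
    (V : Set (Fin (n - 1) → ℝ)) (hV : IsOpen V)
    (xmap : (Fin (n - 1) → ℝ) → (Fin n → ℝ))
    (hxmap : ContDiffOn ℝ (⊤ : ℕ∞) xmap V)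
    (hxU : ∀ u ∈ V, xmap u ∈ U)
    (hrank : ∀ u ∈ V,
      LinearIndependent ℝ (fun α : Fin (n - 1) => fun i => Bproj xmap u α i))
    (N : (Fin (n - 1) → ℝ) → (Fin (n - 1) → ℝ) → (Fin n → ℝ))
    (hposdef : ∀ u ∈ V, ∀ v : Fin (n - 1) → ℝ, yvec xmap u v ≠ 0 →
      ∀ w : Fin n → ℝ, w ≠ 0 →
        0 < ∑ i, ∑ j, gten L (xmap u) i j (yvec xmap u v) * w i * w j)
    (hLstar : ∀ u ∈ V, ∀ v : Fin (n - 1) → ℝ, yvec xmap u v ≠ 0 →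
      0 < RandersChange L σ b (xmap u) (yvec xmap u v))
    (hN1 : ∀ u ∈ V, ∀ v : Fin (n - 1) → ℝ, yvec xmap u v ≠ 0 →
      ∀ α, ∑ i, ∑ j,
        gten L (xmap u) i j (yvec xmap u v) * Bproj xmap u α i * N u v j = 0)
    (hN2 : ∀ u ∈ V, ∀ v : Fin (n - 1) → ℝ, yvec xmap u v ≠ 0 →
      ∑ i, ∑ j, gten L (xmap u) i j (yvec xmap u v) * N u v i * N u v j = 1)
    (hbN : ∀ u ∈ V, ∀ v : Fin (n - 1) → ℝ, yvec xmap u v ≠ 0 →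
      ∑ i, b (xmap u) i * N u v i = 0)
    (P : (Fin n → ℝ) → (Fin n → ℝ) → ℝ)
    (hP : ContDiffOn ℝ (⊤ : ℕ∞)
      (fun p : (Fin n → ℝ) × (Fin n → ℝ) => P p.1 p.2)
      (U ×ˢ {y : Fin n → ℝ | y ≠ 0}))
    (hproj : ∀ x ∈ U, ∀ y : Fin n → ℝ, y ≠ 0 → ∀ i : Fin n,
      spray (RandersChange L σ b) x y i = spray L x y i + P x y * y i) :
    (∀ u ∈ V, ∀ v : Fin (n - 1) → ℝ, yvec xmap u v ≠ 0 →
      ∀ α : Fin (n - 1), normalCurv L xmap u v (N u v) α = 0) ↔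
    (∀ u ∈ V, ∀ v : Fin (n - 1) → ℝ, yvec xmap u v ≠ 0 →
      ∀ α : Fin (n - 1),
        normalCurv (RandersChange L σ b) xmap u v
          (fun i => N u v i /
            Real.sqrt (tauRC L σ b (xmap u) (yvec xmap u v))) α = 0) :=
  randers_conformal_totally_geodesic_general U hU L hL hLpos hLhom σ b V xmap hxU N hposdef hLstar
    hN1 hbN P hP hproj
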